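/- arXiv:2003.04196 — 2 statements merged into one kernel-verified Lean document; each statement's English description precedes it below -/
import Mathlib

section
/- Let N_s be a positive integer and, for each n in {1,…,N_s}, let d_n > 0, c_n > 0 and P_n > 0 be real numbers with 1/d_n − c_n ≤ P_n (so the spectral mask is never active), and let P > 0. Define p_n(λ) = min(P_n, max(0, 1/(λ + d_n) − c_n)) for λ ≥ 0. Then there exists a UNIQUE λ ≥ 0 such that Σ_{n=1}^{N_s} p_n(λ) ≤ P and λ·(P − Σ_{n=1}^{N_s} p_n(λ)) = 0. -/
/-!
The mask hypothesis makes the upper clip inactive for `λ ≥ 0`, and the remaining allocation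
`max 0 (1 / (λ + d) - c)` is continuous and antitone in `λ ≥ 0`, strictly decreasing wherever it
is positive, and vanishes once `λ ≥ 1 / c`. Hence the total power `S λ` is continuous, vanishes
for large `λ`, and strictly decreases wherever it is positive. Existence is `λ = 0` if
`S 0 ≤ P`, and otherwise the intermediate value theorem gives `S λ = P`. For uniqueness, a
positive multiplier `y` has `S y = P > 0` by complementary slackness, so any smaller feasible `x`
would have `S x > S y = P`.
-/

open Finset

section Multiplier

variable {S : ℝ → ℝ} {Ptot : ℝ}

theorem le_of_complementary_slackness (hS : ∀ ⦃x y⦄, 0 ≤ x → x < y → 0 < S y → S y < S x)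
    (hPtot : 0 < Ptot) {x y : ℝ} (hx : 0 ≤ x) (hSx : S x ≤ Ptot) (hy : y * (Ptot - S y) = 0) :
    y ≤ x := by
  by_contra! hxy
  have hSy : S y = Ptot := by
    rcases mul_eq_zero.mp hy with hy0 | hy0
    · exact absurd hy0 (hx.trans_lt hxy).ne'
    · linarith
  linarith [hS hx hxy (hSy ▸ hPtot)]

theorem exists_multiplier (hcont : ContinuousOn S (Set.Ici 0)) {Λ : ℝ} (hΛ : 0 ≤ Λ)
    (hSΛ : S Λ ≤ Ptot) : ∃ lam, 0 ≤ lam ∧ S lam ≤ Ptot ∧ lam * (Ptot - S lam) = 0 := by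
  by_cases hS0 : S 0 ≤ Ptot
  · exact ⟨0, le_rfl, hS0, zero_mul _⟩
  obtain ⟨lam, hlam, hSlam⟩ := intermediate_value_Icc' hΛ (hcont.mono Set.Icc_subset_Ici_self)
    ⟨hSΛ, (not_le.mp hS0).le⟩
  exact ⟨lam, hlam.1, hSlam.le, by rw [hSlam, sub_self, mul_zero]⟩

theorem existsUnique_multiplier (hcont : ContinuousOn S (Set.Ici 0))
    (hS : ∀ ⦃x y⦄, 0 ≤ x → x < y → 0 < S y → S y < S x) (hPtot : 0 < Ptot) {Λ : ℝ}
    (hΛ : 0 ≤ Λ) (hSΛ : S Λ ≤ Ptot) :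
    ∃! lam, 0 ≤ lam ∧ S lam ≤ Ptot ∧ lam * (Ptot - S lam) = 0 := by
  obtain ⟨lam, hlam⟩ := exists_multiplier hcont hΛ hSΛ
  refine ⟨lam, hlam, fun y hy => le_antisymm ?_ ?_⟩
  · exact le_of_complementary_slackness hS hPtot hlam.1 hlam.2.1 hy.2.2
  · exact le_of_complementary_slackness hS hPtot hy.1 hy.2.1 hlam.2.2

end Multiplier

section WaterFilling

noncomputable def waterFilling (d c lam : ℝ) : ℝ := max 0 (1 / (lam + d) - c)

variable {d c : ℝ}

theorem min_waterFilling_eq (hd : 0 < d) {P : ℝ} (hP : 0 ≤ P) (hmask : 1 / d - c ≤ P)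
    {lam : ℝ} (hlam : 0 ≤ lam) : min P (waterFilling d c lam) = waterFilling d c lam := by
  have : 1 / (lam + d) ≤ 1 / d := one_div_le_one_div_of_le hd (by linarith)
  exact min_eq_right (max_le hP (by linarith))

theorem waterFilling_le_of_le (hd : 0 < d) {x y : ℝ} (hx : 0 ≤ x) (hxy : x ≤ y) :
    waterFilling d c y ≤ waterFilling d c x := by
  have : 1 / (y + d) ≤ 1 / (x + d) := one_div_le_one_div_of_le (by linarith) (by linarith)
  exact max_le_max le_rfl (by linarith)

theorem waterFilling_lt_of_lt (hd : 0 < d) {x y : ℝ} (hx : 0 ≤ x) (hxy : x < y)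
    (hy : 0 < waterFilling d c y) : waterFilling d c y < waterFilling d c x := by
  have hpos : 0 < 1 / (y + d) - c := by
    simpa [waterFilling] using hy
  have : 1 / (y + d) < 1 / (x + d) := one_div_lt_one_div_of_lt (by linarith) (by linarith)
  calc waterFilling d c y = 1 / (y + d) - c := max_eq_right hpos.le
    _ < 1 / (x + d) - c := by linarith
    _ ≤ waterFilling d c x := le_max_right _ _

theorem waterFilling_eq_zero (hd : 0 < d) (hc : 0 < c) {lam : ℝ} (hlam : 1 / c ≤ lam) :
    waterFilling d c lam = 0 := by
  have hlam0 : 0 < lam := (one_div_pos.mpr hc).trans_le hlam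
  have : 1 / (lam + d) ≤ c := calc
    1 / (lam + d) ≤ 1 / lam := one_div_le_one_div_of_le hlam0 (by linarith)
    _ ≤ c := (one_div_le hlam0 hc).mpr hlam
  exact max_eq_left (by linarith)

theorem continuousOn_waterFilling (hd : 0 < d) : ContinuousOn (waterFilling d c) (Set.Ici 0) := by
  refine continuousOn_const.sup (ContinuousOn.sub ?_ continuousOn_const)
  exact continuousOn_const.div (by fun_prop) fun x (hx : 0 ≤ x) => by positivity

end WaterFilling

section TotalPower

variable {ι : Type*} [Fintype ι] {d c : ι → ℝ}

theorem sum_waterFilling_lt_of_lt (hd : ∀ n, 0 < d n) {x y : ℝ} (hx : 0 ≤ x) (hxy : x < y)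
    (hy : 0 < ∑ n, waterFilling (d n) (c n) y) :
    ∑ n, waterFilling (d n) (c n) y < ∑ n, waterFilling (d n) (c n) x := by
  obtain ⟨n, hn⟩ : ∃ n, 0 < waterFilling (d n) (c n) y := by
    by_contra! h
    exact hy.not_ge (sum_nonpos fun n _ => h n)
  exact sum_lt_sum (fun i _ => waterFilling_le_of_le (hd i) hx hxy.le)
    ⟨n, mem_univ n, waterFilling_lt_of_lt (hd n) hx hxy hn⟩

theorem sum_waterFilling_eq_zero (hd : ∀ n, 0 < d n) (hc : ∀ n, 0 < c n) :
    ∑ n, waterFilling (d n) (c n) (∑ m, 1 / c m) = 0 :=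
  sum_eq_zero fun n _ => waterFilling_eq_zero (hd n) (hc n) <|
    single_le_sum (fun m _ => (one_div_pos.mpr (hc m)).le) (mem_univ n)

end TotalPower

theorem stmt_1_general (Ns : ℕ) (d c P : Fin Ns → ℝ)
    (hd : ∀ n, 0 < d n) (hc : ∀ n, 0 < c n) (hP : ∀ n, 0 < P n)
    (hmask : ∀ n, 1 / d n - c n ≤ P n)
    (Ptot : ℝ) (hPtot : 0 < Ptot) :
    ∃! lam : ℝ, 0 ≤ lam ∧
      (∑ n, min (P n) (max 0 (1 / (lam + d n) - c n))) ≤ Ptot ∧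
      lam * (Ptot - ∑ n, min (P n) (max 0 (1 / (lam + d n) - c n))) = 0 := by
  have hclip : ∀ lam, 0 ≤ lam → ∑ n, min (P n) (max 0 (1 / (lam + d n) - c n)) =
      ∑ n, waterFilling (d n) (c n) lam := fun lam hlam =>
    sum_congr rfl fun n _ => min_waterFilling_eq (hd n) (hP n).le (hmask n) hlam
  refine (existsUnique_congr fun lam => and_congr_right fun hlam => by rw [hclip lam hlam]).mpr ?_
  have hΛ : 0 ≤ ∑ m, 1 / c m := sum_nonneg fun m _ => (one_div_pos.mpr (hc m)).le
  refine existsUnique_multiplier ?_ (fun x y hx hxy hy => sum_waterFilling_lt_of_lt hd hx hxy hy)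
    hPtot hΛ ?_
  · exact continuousOn_finsetSum _ fun n _ => continuousOn_waterFilling (hd n)
  · rw [sum_waterFilling_eq_zero hd hc]
    exact hPtot.le

/-- Theorem 1: when the spectral masks are never active (`1/d n - c n ≤ P n`), there is a
UNIQUE Lagrange multiplier `lam ≥ 0` satisfying the total power constraint together with
complementary slackness for the clipped water-filling allocation. -/
theorem stmt_1 (Ns : ℕ) (hNs : 0 < Ns) (d c P : Fin Ns → ℝ)
    (hd : ∀ n, 0 < d n) (hc : ∀ n, 0 < c n) (hP : ∀ n, 0 < P n)
    (hmask : ∀ n, 1 / d n - c n ≤ P n)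
    (Ptot : ℝ) (hPtot : 0 < Ptot) :
    ∃! lam : ℝ, 0 ≤ lam ∧
      (∑ n, min (P n) (max 0 (1 / (lam + d n) - c n))) ≤ Ptot ∧
      lam * (Ptot - ∑ n, min (P n) (max 0 (1 / (lam + d n) - c n))) = 0 :=
  stmt_1_general Ns d c P hd hc hP hmask Ptot hPtot
end

section
/- Let B (base stations), K (users) and N (subchannels) be finite nonempty sets and let W : B × K × N → ℝ. Consider pairs (u, s) with u : B × K → {0,1} and s : B × K × N → {0,1} satisfying Σ_{b∈B} s(b,k,n) ≤ 1 for every k,n and Σ_{k∈K} s(b,k,n) ≤ 1 for every b,n, and consider functions ρ : B × K × N → {0,1} satisfying the same two families of constraints with ρ in place of s. Then the maximum of Σ_{b,k,n} u(b,k)·s(b,k,n)·W(b,k,n) over all feasible pairs (u, s) equals the maximum of Σ_{b,k,n} ρ(b,k,n)·W(b,k,n) over all feasible ρ. (Both maxima exist since the feasible sets are finite and contain the all-zero point.) -/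
open Finset

/-- Equivalence between the joint user-association/subchannel-allocation problem (5)
and the reduced problem (6) via the substitution `ρ = u·s`: the two maxima exist and
are equal. -/
theorem stmt_10 (B K N : Type) [Fintype B] [Fintype K] [Fintype N]
    [Nonempty B] [Nonempty K] [Nonempty N] (W : B → K → N → ℝ) :
    ∃ V : ℝ,
      IsGreatest {v : ℝ | ∃ (u : B → K → ℝ) (s : B → K → N → ℝ),
        (∀ b k, u b k = 0 ∨ u b k = 1) ∧
        (∀ b k n, s b k n = 0 ∨ s b k n = 1) ∧
        (∀ k n, ∑ b, s b k n ≤ 1) ∧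
        (∀ b n, ∑ k, s b k n ≤ 1) ∧
        v = ∑ b, ∑ k, ∑ n, u b k * s b k n * W b k n} V ∧
      IsGreatest {v : ℝ | ∃ ρ : B → K → N → ℝ,
        (∀ b k n, ρ b k n = 0 ∨ ρ b k n = 1) ∧
        (∀ k n, ∑ b, ρ b k n ≤ 1) ∧
        (∀ b n, ∑ k, ρ b k n ≤ 1) ∧
        v = ∑ b, ∑ k, ∑ n, ρ b k n * W b k n} V := by
  set S1 := {v : ℝ | ∃ (u : B → K → ℝ) (s : B → K → N → ℝ),
        (∀ b k, u b k = 0 ∨ u b k = 1) ∧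
        (∀ b k n, s b k n = 0 ∨ s b k n = 1) ∧
        (∀ k n, ∑ b, s b k n ≤ 1) ∧
        (∀ b n, ∑ k, s b k n ≤ 1) ∧
        v = ∑ b, ∑ k, ∑ n, u b k * s b k n * W b k n} with hS1
  set S2 := {v : ℝ | ∃ ρ : B → K → N → ℝ,
        (∀ b k n, ρ b k n = 0 ∨ ρ b k n = 1) ∧
        (∀ k n, ∑ b, ρ b k n ≤ 1) ∧
        (∀ b n, ∑ k, ρ b k n ≤ 1) ∧
        v = ∑ b, ∑ k, ∑ n, ρ b k n * W b k n} with hS2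
  -- The two feasible value sets coincide.
  have hEq : S1 = S2 := by
    apply Set.eq_of_subset_of_subset
    · rintro v ⟨u, s, hu, hs, hkn, hbn, hv⟩
      refine ⟨fun b k n => u b k * s b k n, ?_, ?_, ?_, ?_⟩
      · intro b k n
        rcases hu b k with h | h <;> rcases hs b k n with h' | h' <;>
          simp [h, h']
      · intro k n
        refine le_trans (Finset.sum_le_sum fun b _ => ?_) (hkn k n)
        rcases hu b k with h | h <;> rcases hs b k n with h' | h' <;>
          simp [h, h']
      · intro b n
        refine le_trans (Finset.sum_le_sum fun k _ => ?_) (hbn b n)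
        rcases hu b k with h | h <;> rcases hs b k n with h' | h' <;>
          simp [h, h']
      · exact hv
    · rintro v ⟨ρ, hρ, hkn, hbn, hv⟩
      refine ⟨fun _ _ => 1, ρ, fun _ _ => Or.inr rfl, hρ, hkn, hbn, ?_⟩
      simpa using hv
  -- S2 is finite: it is contained in the range of a function on a fintype.
  have hfin : S2.Finite := by
    have : S2 ⊆ Set.range (fun f : B → K → N → Bool =>
        ∑ b, ∑ k, ∑ n, (if f b k n then (1:ℝ) else 0) * W b k n) := by
      rintro v ⟨ρ, hρ, _, _, hv⟩
      refine ⟨fun b k n => decide (ρ b k n = 1), ?_⟩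
      rw [hv]
      refine Finset.sum_congr rfl fun b _ => Finset.sum_congr rfl fun k _ =>
        Finset.sum_congr rfl fun n _ => ?_
      rcases hρ b k n with h | h <;> simp [h]
    exact Set.Finite.subset (Set.finite_range _) this
  -- S2 is nonempty: the all-zero allocation is feasible.
  have hne : S2.Nonempty := by
    refine ⟨0, fun _ _ _ => 0, fun _ _ _ => Or.inl rfl, ?_, ?_, by simp⟩ <;>
      intro _ _ <;> simp
  obtain ⟨V, hVmem, hVmax⟩ := Set.exists_max_image S2 id hfin hne
  exact ⟨V, by rw [hEq]; exact ⟨hVmem, hVmax⟩, ⟨hVmem, hVmax⟩⟩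
end
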